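/- Let f be holomorphic in a neighborhood of 0 with power series f(z) = z + a·z^k + (higher order terms), where k ≥ 2 and a ∈ ℂ. Then for every n ∈ ℕ, the n-th iterate has power series f^[n](z) = z + n·a·z^k + (higher order terms); equivalently, the k-th iterated derivative satisfies iteratedDeriv k (f^[n]) 0 = n · k! · a, and iteratedDeriv j (f^[n]) 0 = 0 for 2 ≤ j < k, while deriv (f^[n]) 0 = 1. In particular, if a ≠ 0 then |iteratedDeriv k (f^[n]) 0| → ∞ as n → ∞. -/

import Mathlib

/-!
Say that `g` is `z + c z^k + O(z^{k+1})` when `g - (z + c z^k)` vanishes to order at least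
`k + 1` at `0`; by Taylor's formula this prescribes exactly the derivatives of `g` at `0` up to
order `k`. The condition is stable under composition, with the coefficients adding up:
`f ∘ u - (z + (a + c) z^k) = (f - (w + a w^k)) ∘ u + (u - (z + c z^k)) + a (u^k - z^k)`,
and `u^k - z^k = (u - z) ∑ uⁱ z^{k-1-i}` vanishes to order `k + 1`, since `u - z` vanishes to
order `k` and, as `k ≥ 2`, the sum vanishes at `0`. Induction on `n` gives
`f^[n] = z + n a z^k + O(z^{k+1})`.
-/

open Filter

section

variable {𝕜 : Type*} [NontriviallyNormedField 𝕜]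

lemma natCast_le_analyticOrderAt_sub_iff {E : Type*} [NormedAddCommGroup E] [NormedSpace 𝕜 E]
    [CharZero 𝕜] [CompleteSpace E] {f g : 𝕜 → E} {z₀ : 𝕜} {n : ℕ}
    (hf : AnalyticAt 𝕜 f z₀) (hg : AnalyticAt 𝕜 g z₀) :
    n ≤ analyticOrderAt (f - g) z₀ ↔ ∀ i < n, iteratedDeriv i f z₀ = iteratedDeriv i g z₀ := by
  simp only [natCast_le_analyticOrderAt_iff_iteratedDeriv_eq_zero (hf.sub hg),
    iteratedDeriv_sub hf.contDiffAt hg.contDiffAt, sub_eq_zero]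

lemma iteratedDeriv_add_const_mul_pow_zero [CharZero 𝕜] (c : 𝕜) (k j : ℕ) :
    iteratedDeriv j (fun z => z + c * z ^ k) 0 =
      (if j = 1 then 1 else 0) + if j = k then k.factorial * c else 0 := by
  rw [iteratedDeriv_fun_add (by fun_prop) (by fun_prop), iteratedDeriv_fun_id_zero,
    iteratedDeriv_const_mul_field, iteratedDeriv_fun_pow_zero]
  split_ifs <;> ring

lemma natCast_le_analyticOrderAt_sub_id_add_mul_pow_iff [CharZero 𝕜] [CompleteSpace 𝕜]
    {g : 𝕜 → 𝕜} {c : 𝕜} {k : ℕ} (hk : 2 ≤ k) (hg : AnalyticAt 𝕜 g 0) :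
    ((k + 1 : ℕ) : ℕ∞) ≤ analyticOrderAt (fun z => g z - (z + c * z ^ k)) 0 ↔
      g 0 = 0 ∧ deriv g 0 = 1 ∧ (∀ j, 2 ≤ j → j < k → iteratedDeriv j g 0 = 0) ∧
        iteratedDeriv k g 0 = k.factorial * c := by
  rw [show (fun z => g z - (z + c * z ^ k)) = g - fun z => z + c * z ^ k from rfl,
    natCast_le_analyticOrderAt_sub_iff hg (by fun_prop)]
  simp only [iteratedDeriv_add_const_mul_pow_zero]
  constructor
  · intro h
    refine ⟨by simpa [show 0 ≠ k by omega] using h 0 (by omega),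
      by simpa [show 1 ≠ k by omega] using h 1 (by omega),
      fun j hj hjk => by simpa [show j ≠ 1 by omega, hjk.ne] using h j (by omega),
      by simpa [show k ≠ 1 by omega] using h k (by omega)⟩
  · rintro ⟨h0, h1, hmid, hkc⟩ i hi
    rcases (show i = 0 ∨ i = 1 ∨ (2 ≤ i ∧ i < k) ∨ i = k by omega) with rfl | rfl | ⟨hi2, hik⟩ | rfl
    · simp [h0, show 0 ≠ k by omega]
    · simp [h1, show 1 ≠ k by omega]
    · simp [hmid i hi2 hik, show i ≠ 1 by omega, hik.ne]
    · simp [hkc, show i ≠ 1 by omega]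

lemma natCast_le_analyticOrderAt_mul_pow {z₀ : 𝕜} (c : 𝕜) (k : ℕ) :
    (k : ℕ∞) ≤ analyticOrderAt (fun z => c * (z - z₀) ^ k) z₀ := by
  rw [natCast_le_analyticOrderAt (by fun_prop)]
  exact ⟨fun _ => c, analyticAt_const, .of_forall fun z => by simp [mul_comm]⟩

lemma analyticOrderAt_sub_add_one_le_pow_sub_pow {u v : 𝕜 → 𝕜} {z₀ : 𝕜} {k : ℕ}
    (hu : AnalyticAt 𝕜 u z₀) (hv : AnalyticAt 𝕜 v z₀) (hu₀ : u z₀ = 0) (hv₀ : v z₀ = 0)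
    (hk : 2 ≤ k) :
    analyticOrderAt (u - v) z₀ + 1 ≤ analyticOrderAt (u ^ k - v ^ k) z₀ := by
  set S : 𝕜 → 𝕜 := fun z => ∑ i ∈ Finset.range k, u z ^ i * v z ^ (k - 1 - i)
  have hS : AnalyticAt 𝕜 S z₀ := by fun_prop
  have hS₀ : S z₀ = 0 := Finset.sum_eq_zero fun i hi => by
    rw [hu₀, hv₀, ← pow_add]
    exact zero_pow (by grind)
  have hfactor : u ^ k - v ^ k = S * (u - v) := by
    funext z
    exact (geom_sum₂_mul (u z) (v z) k).symm
  rw [hfactor, analyticOrderAt_mul hS (hu.sub hv), add_comm]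
  gcongr
  exact Order.one_le_iff_ne_zero.mpr (hS.analyticOrderAt_ne_zero.mpr hS₀)

lemma natCast_le_analyticOrderAt_comp_sub {f u : 𝕜 → 𝕜} {a c : 𝕜} {k : ℕ} (hk : 2 ≤ k)
    (hf : AnalyticAt 𝕜 f 0) (hu : AnalyticAt 𝕜 u 0)
    (hfk : ((k + 1 : ℕ) : ℕ∞) ≤ analyticOrderAt (fun z => f z - (z + a * z ^ k)) 0)
    (huk : ((k + 1 : ℕ) : ℕ∞) ≤ analyticOrderAt (fun z => u z - (z + c * z ^ k)) 0) :
    ((k + 1 : ℕ) : ℕ∞) ≤ analyticOrderAt (fun z => f (u z) - (z + (a + c) * z ^ k)) 0 := by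
  set F : 𝕜 → 𝕜 := fun w => f w - (w + a * w ^ k)
  have hu₀ : u 0 = 0 := by
    simpa [show k ≠ 0 by omega] using apply_eq_zero_of_analyticOrderAt_ne_zero
      (ne_bot_of_le_ne_bot (by simp) huk)
  have hFu : ((k + 1 : ℕ) : ℕ∞) ≤ analyticOrderAt (F ∘ u) 0 := by
    rw [AnalyticAt.analyticOrderAt_comp (by rw [hu₀]; fun_prop) hu, hu₀]
    simp only [sub_zero]
    exact le_mul_of_le_of_one_le hfk
      (Order.one_le_iff_ne_zero.mpr (hu.analyticOrderAt_ne_zero.mpr hu₀))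
  have hu_sub_id : (k : ℕ∞) ≤ analyticOrderAt (u - id) 0 := by
    have : u - id = (fun z => u z - (z + c * z ^ k)) + fun z => c * (z - 0) ^ k := by
      funext z
      simp only [Pi.sub_apply, Pi.add_apply, id_eq, sub_zero]
      ring
    rw [this]
    exact le_trans (le_min (le_trans (by simp) huk) (natCast_le_analyticOrderAt_mul_pow c k))
      le_analyticOrderAt_add
  have hpow : ((k + 1 : ℕ) : ℕ∞) ≤ analyticOrderAt (fun z => a * (u z ^ k - z ^ k)) 0 := by
    have h := analyticOrderAt_sub_add_one_le_pow_sub_pow hu (analyticAt_id (𝕜 := 𝕜)) hu₀ rfl hk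
    calc ((k + 1 : ℕ) : ℕ∞) ≤ analyticOrderAt (u ^ k - id ^ k) 0 := by
          push_cast; exact le_trans (by gcongr) h
      _ ≤ analyticOrderAt (fun _ : 𝕜 => a) 0 + analyticOrderAt (u ^ k - id ^ k) 0 := le_add_self
      _ = _ := (analyticOrderAt_mul analyticAt_const (by fun_prop)).symm
  have hsplit : (fun z => f (u z) - (z + (a + c) * z ^ k)) =
      (F ∘ u + fun z => u z - (z + c * z ^ k)) + fun z => a * (u z ^ k - z ^ k) := by
    funext z
    simp only [Pi.add_apply, Function.comp_apply, F]
    ring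
  rw [hsplit]
  exact le_trans (le_min (le_trans (le_min hFu huk) le_analyticOrderAt_add) hpow)
    le_analyticOrderAt_add

lemma AnalyticAt.iterate {E : Type*} [NormedAddCommGroup E] [NormedSpace 𝕜 E]
    {f : E → E} {x : E} (hf : AnalyticAt 𝕜 f x) (hx : f x = x) (n : ℕ) :
    AnalyticAt 𝕜 f^[n] x := by
  induction n with
  | zero => exact analyticAt_id
  | succ n ih =>
    rw [Function.iterate_succ']
    exact (Function.iterate_fixed hx n ▸ hf).comp ih

lemma natCast_le_analyticOrderAt_iterate_sub {f : 𝕜 → 𝕜} {a : 𝕜} {k : ℕ} (hk : 2 ≤ k)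
    (hf : AnalyticAt 𝕜 f 0) (h₀ : f 0 = 0)
    (hfk : ((k + 1 : ℕ) : ℕ∞) ≤ analyticOrderAt (fun z => f z - (z + a * z ^ k)) 0) (n : ℕ) :
    ((k + 1 : ℕ) : ℕ∞) ≤ analyticOrderAt (fun z => f^[n] z - (z + n * a * z ^ k)) 0 := by
  induction n with
  | zero => simp [analyticOrderAt_eq_top.mpr (Eventually.of_forall fun _ => rfl)]
  | succ n ih =>
    have h := natCast_le_analyticOrderAt_comp_sub hk hf (hf.iterate h₀ n) hfk ih
    simp only [Function.iterate_succ_apply']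
    convert h using 5
    push_cast; ring

end

/-- If `f(z) = z + a·z^k + …` near `0` (with `k ≥ 2`), then
`f^[n](z) = z + n·a·z^k + …`; in particular if `a ≠ 0` the `k`-th iterated
derivative of `f^[n]` at `0` blows up as `n → ∞`. -/
theorem stmt_8 (f : ℂ → ℂ) (k : ℕ) (a : ℂ) (hk : 2 ≤ k)
    (hf : AnalyticAt ℂ f 0) (h0 : f 0 = 0) (h1 : deriv f 0 = 1)
    (hvanish : ∀ j : ℕ, 2 ≤ j → j < k → iteratedDeriv j f 0 = 0)
    (hka : iteratedDeriv k f 0 = (k.factorial : ℂ) * a) :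
    (∀ n : ℕ,
      iteratedDeriv k (f^[n]) 0 = (n : ℂ) * (k.factorial : ℂ) * a ∧
      (∀ j : ℕ, 2 ≤ j → j < k → iteratedDeriv j (f^[n]) 0 = 0) ∧
      deriv (f^[n]) 0 = 1) ∧
    (a ≠ 0 → Tendsto (fun n : ℕ => ‖iteratedDeriv k (f^[n]) 0‖) atTop atTop) := by
  have hfk := (natCast_le_analyticOrderAt_sub_id_add_mul_pow_iff hk hf).mpr ⟨h0, h1, hvanish, hka⟩
  have hiter : ∀ n : ℕ,
      iteratedDeriv k (f^[n]) 0 = (n : ℂ) * (k.factorial : ℂ) * a ∧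
      (∀ j : ℕ, 2 ≤ j → j < k → iteratedDeriv j (f^[n]) 0 = 0) ∧
      deriv (f^[n]) 0 = 1 := fun n => by
    obtain ⟨-, hderiv, hmid, hkth⟩ := (natCast_le_analyticOrderAt_sub_id_add_mul_pow_iff hk
      (hf.iterate h0 n)).mp (natCast_le_analyticOrderAt_iterate_sub hk hf h0 hfk n)
    exact ⟨by rw [hkth]; ring, hmid, hderiv⟩
  refine ⟨hiter, fun ha => ?_⟩
  have hnorm : ∀ n : ℕ, ‖iteratedDeriv k (f^[n]) 0‖ = n * (k.factorial * ‖a‖) := fun n => by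
    simp [(hiter n).1, mul_assoc]
  simp only [hnorm]
  exact tendsto_natCast_atTop_atTop.atTop_mul_const (by positivity)
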